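/- arXiv:math/0602632 — 2 statements merged into one kernel-verified Lean document; each statement's English description precedes it below -/
import Mathlib

section
/- Let δ be a derivation of a ring A, A^δ := ker δ, and suppose y^{[0]} = 1, y^{[1]}, …, y^{[m]} are elements of A with δ^i(y^{[i]}) = 1 for all 0 ≤ i ≤ m. Then there exists a unique δ-descent x^{[0]} = 1, x^{[1]}, …, x^{[m]} such that x^{[1]} = y^{[1]} and, for each 2 ≤ i ≤ m, x^{[i]} = y^{[i]} + Σ_{j=1}^{i−1} c_{ij} y^{[j]} for some elements c_{ij} ∈ A^δ. -/
/-!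
Write `K = ker δ`. If `δ^[j] z_j = 1` for `j < k`, then `ker δ^[k]` is the set of
`K`-combinations `∑_{j<k} c_j z_j`: for `z ∈ ker δ^[k+1]`, `a = δ^[k] z` lies in `K` and
`z - a z_k ∈ ker δ^[k]`. Conversely `δ^[k]` of such a combination over `j ≤ k` is its top
coefficient, so the difference of two descents of the required form, being a constant
`K`-combination of `y^{[1]}, …, y^{[i-1]}`, vanishes.

For existence, extend a descent `x^{[0]}, …, x^{[n]}`. Taking `z = x`, every `w ∈ ker δ^[n]` is
`∑ c_j x^{[j]} = δ (∑ c_j x^{[j+1]})`, so `δ y^{[n+1]} - x^{[n]} ∈ ker δ^[n]` has a primitive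
`v ∈ ker δ^[n+1]`, which by the case `z = y` is `c_0 + ∑_{j=1}^{n} c_j y^{[j]}`; then
`x^{[n+1]} = y^{[n+1]} - ∑_{j=1}^{n} c_j y^{[j]}`.
-/

/-- A derivation of a ring: an additive map satisfying the Leibniz rule. -/
def IsDerivation {R : Type*} [Ring R] (δ : R → R) : Prop :=
  (∀ a b : R, δ (a + b) = δ a + δ b) ∧ (∀ a b : R, δ (a * b) = δ a * b + a * δ b)

/-- A `δ`-descent: a finite sequence `x^{[0]} = 1, x^{[1]}, …, x^{[m]}` with
`δ(x^{[i]}) = x^{[i−1]}`. -/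
def IsDescent {A : Type*} [Ring A] (δ : A → A) (m : ℕ) (x : ℕ → A) : Prop :=
  x 0 = 1 ∧ ∀ i : ℕ, 1 ≤ i → i ≤ m → δ (x i) = x (i - 1)

open Finset

lemma sum_range_succ_mul_eq_add_sum_Icc {A : Type*} [Ring A] {y : ℕ → A} (hy : y 0 = 1)
    (c : ℕ → A) (k : ℕ) :
    ∑ j ∈ range (k + 1), c j * y j = c 0 + ∑ j ∈ Icc 1 k, c j * y j := by
  rw [sum_range_eq_add_Ico _ (by omega : 0 < k + 1), Ico_add_one_right_eq_Icc, hy, mul_one]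

namespace IsDerivation

variable {A : Type*} [Ring A] {δ : A → A}

def toAddMonoidHom (hδ : IsDerivation δ) : A →+ A := AddMonoidHom.mk' δ hδ.1

variable (hδ : IsDerivation δ)
include hδ

lemma map_zero : δ 0 = 0 := _root_.map_zero hδ.toAddMonoidHom

lemma map_one : δ 1 = 0 := by simpa using hδ.2 1 1

lemma map_neg (a : A) : δ (-a) = -δ a := _root_.map_neg hδ.toAddMonoidHom a

lemma map_sub (a b : A) : δ (a - b) = δ a - δ b := _root_.map_sub hδ.toAddMonoidHom a b

lemma map_sum {ι : Type*} (s : Finset ι) (f : ι → A) : δ (∑ i ∈ s, f i) = ∑ i ∈ s, δ (f i) :=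
  _root_.map_sum hδ.toAddMonoidHom f s

lemma map_const_mul {c : A} (hc : δ c = 0) (a : A) : δ (c * a) = c * δ a := by
  rw [hδ.2, hc, zero_mul, zero_add]

lemma iterate_map_zero (k : ℕ) : δ^[k] 0 = 0 := Function.iterate_fixed hδ.map_zero k

lemma iterate_map_sub (k : ℕ) (a b : A) : δ^[k] (a - b) = δ^[k] a - δ^[k] b :=
  _root_.iterate_map_sub hδ.toAddMonoidHom k a b

lemma iterate_map_sum {ι : Type*} (k : ℕ) (s : Finset ι) (f : ι → A) :
    δ^[k] (∑ i ∈ s, f i) = ∑ i ∈ s, δ^[k] (f i) :=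
  _root_.map_sum ((show AddMonoid.End A from hδ.toAddMonoidHom) ^ k) f s

lemma iterate_const_mul {c : A} (hc : δ c = 0) (k : ℕ) (a : A) :
    δ^[k] (c * a) = c * δ^[k] a :=
  Function.Commute.iterate_left (hδ.map_const_mul hc) k a

lemma iterate_eq_zero_of_lt {z : A} {l k : ℕ} (hz : δ^[l] z = 1) (hlk : l < k) :
    δ^[k] z = 0 := by
  obtain ⟨n, rfl⟩ := Nat.exists_eq_add_of_lt hlk
  rw [show l + n + 1 = n + 1 + l by omega, Function.iterate_add_apply, hz,
    Function.iterate_succ_apply, hδ.map_one, hδ.iterate_map_zero]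

section Combination

variable {y c : ℕ → A}

lemma iterate_sum_range_succ {k : ℕ} (hy : ∀ j ≤ k, δ^[j] (y j) = 1)
    (hc : ∀ j, δ (c j) = 0) : δ^[k] (∑ j ∈ range (k + 1), c j * y j) = c k := by
  rw [hδ.iterate_map_sum, sum_range_succ, hδ.iterate_const_mul (hc k), hy k le_rfl, mul_one,
    add_eq_right]
  refine sum_eq_zero fun j hj => ?_
  rw [hδ.iterate_const_mul (hc j),
    hδ.iterate_eq_zero_of_lt (hy j (mem_range.1 hj).le) (mem_range.1 hj), mul_zero]

lemma coeff_eq_zero_of_iterate_sum_eq_zero {n k : ℕ} (hy : ∀ j ≤ k, δ^[j] (y j) = 1)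
    (hc : ∀ j, δ (c j) = 0) (h : δ^[n] (∑ j ∈ range (k + 1), c j * y j) = 0) :
    ∀ j, n ≤ j → j ≤ k → c j = 0 := by
  induction k with
  | zero =>
    intro j hnj hj
    obtain rfl : j = 0 := by omega
    obtain rfl : n = 0 := by omega
    rw [← hδ.iterate_sum_range_succ hy hc, h]
  | succ k ih =>
    intro j hnj hj
    have htop : c (k + 1) = 0 := by
      have h' := congrArg δ^[k + 1 - n] h
      rwa [← Function.iterate_add_apply, Nat.sub_add_cancel (hnj.trans hj),
        hδ.iterate_sum_range_succ hy hc, hδ.iterate_map_zero] at h'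
    rcases hj.lt_or_eq with hj | rfl
    · rw [sum_range_succ, htop, zero_mul, add_zero] at h
      exact ih (fun i hi => hy i (by omega)) h j hnj (by omega)
    · exact htop

lemma sum_Icc_eq_zero_of_map_eq_zero {k : ℕ} (hy : ∀ j ≤ k, δ^[j] (y j) = 1)
    (hc : ∀ j, δ (c j) = 0) (h : δ (∑ j ∈ Icc 1 k, c j * y j) = 0) :
    ∑ j ∈ Icc 1 k, c j * y j = 0 := by
  have hrange : δ^[1] (∑ j ∈ range (k + 1), c j * y j) = 0 := by
    rw [Function.iterate_one, sum_range_succ_mul_eq_add_sum_Icc (hy 0 (Nat.zero_le k)), hδ.1,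
      h, hc, add_zero]
  refine sum_eq_zero fun j hj => ?_
  rw [hδ.coeff_eq_zero_of_iterate_sum_eq_zero hy hc hrange j (mem_Icc.1 hj).1 (mem_Icc.1 hj).2,
    zero_mul]

lemma exists_eq_sum_of_iterate_eq_zero {k : ℕ} (hy : ∀ j < k, δ^[j] (y j) = 1) {z : A}
    (hz : δ^[k] z = 0) : ∃ c : ℕ → A, (∀ j, δ (c j) = 0) ∧ z = ∑ j ∈ range k, c j * y j := by
  induction k generalizing z with
  | zero => exact ⟨0, fun _ => hδ.map_zero, by simpa using hz⟩
  | succ k ih =>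
    set a := δ^[k] z
    have ha : δ a = 0 := by rwa [← Function.iterate_succ_apply' δ k z]
    obtain ⟨c, hc, hzc⟩ := ih (fun j hj => hy j (by omega)) (z := z - a * y k) (by
      rw [hδ.iterate_map_sub, hδ.iterate_const_mul ha, hy k k.lt_succ_self, mul_one, sub_self])
    refine ⟨Function.update c k a, fun j => ?_, ?_⟩
    · rcases eq_or_ne j k with rfl | hj
      · rwa [Function.update_self]
      · rw [Function.update_of_ne hj, hc]
    · rw [sum_range_succ, Function.update_self, ← sub_eq_iff_eq_add, hzc]
      exact sum_congr rfl fun j hj => by rw [Function.update_of_ne (mem_range.1 hj).ne]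

end Combination

end IsDerivation

namespace IsDescent

variable {A : Type*} [Ring A] {δ : A → A} {n : ℕ} {x : ℕ → A}

lemma iterate_eq_one (hx : IsDescent δ n x) : ∀ j ≤ n, δ^[j] (x j) = 1 := by
  intro j
  induction j with
  | zero => exact fun _ => hx.1
  | succ j ih =>
    intro hj
    rw [Function.iterate_succ_apply, hx.2 (j + 1) (by omega) hj, Nat.add_sub_cancel]
    exact ih (by omega)

lemma exists_map_eq (hδ : IsDerivation δ) (hx : IsDescent δ n x) {w : A} (hw : δ^[n] w = 0) :
    ∃ v, δ v = w := by
  obtain ⟨c, hc, rfl⟩ :=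
    hδ.exists_eq_sum_of_iterate_eq_zero (fun j hj => hx.iterate_eq_one j hj.le) hw
  refine ⟨∑ j ∈ range n, c j * x (j + 1), ?_⟩
  rw [hδ.map_sum]
  refine sum_congr rfl fun j hj => ?_
  rw [hδ.map_const_mul (hc j), hx.2 (j + 1) (by omega) (mem_range.1 hj), Nat.add_sub_cancel]

lemma exists_map_eq_add_sum (hδ : IsDerivation δ) {y : ℕ → A}
    (hy : ∀ i ≤ n + 1, δ^[i] (y i) = 1) (hx : IsDescent δ n x) :
    ∃ c : ℕ → A, (∀ j, δ (c j) = 0) ∧ δ (y (n + 1) + ∑ j ∈ Icc 1 n, c j * y j) = x n := by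
  have hw : δ^[n] (δ (y (n + 1)) - x n) = 0 := by
    rw [hδ.iterate_map_sub, ← Function.iterate_succ_apply δ n, hy _ le_rfl,
      hx.iterate_eq_one n le_rfl, sub_self]
  obtain ⟨v, hv⟩ := hx.exists_map_eq hδ hw
  obtain ⟨d, hd, hvd⟩ := hδ.exists_eq_sum_of_iterate_eq_zero (k := n + 1)
    (fun j hj => hy j (by omega)) (by rw [Function.iterate_succ_apply, hv, hw])
  rw [sum_range_succ_mul_eq_add_sum_Icc (hy 0 (Nat.zero_le _))] at hvd
  refine ⟨fun j => -d j, fun j => by rw [hδ.map_neg, hd, neg_zero], ?_⟩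
  simp only [neg_mul, sum_neg_distrib, ← sub_eq_add_neg, ← sub_eq_iff_eq_add'.2 hvd,
    hδ.map_sub, hv, hd, sub_zero, sub_sub_cancel]

end IsDescent

section Unitriangular

variable {A : Type*} [Ring A] {δ : A → A} {y x : ℕ → A}

def IsUnitriangular (δ : A → A) (y x : ℕ → A) (i : ℕ) : Prop :=
  ∃ c : ℕ → A, (∀ j, δ (c j) = 0) ∧ x i = y i + ∑ j ∈ Icc 1 (i - 1), c j * y j

lemma IsDerivation.isUnitriangular_of_eq (hδ : IsDerivation δ) {i : ℕ} (h : x i = y i) :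
    IsUnitriangular δ y x i :=
  ⟨0, fun _ => hδ.map_zero, by simpa using h⟩

lemma IsDerivation.isUnitriangular_one_iff (hδ : IsDerivation δ) :
    IsUnitriangular δ y x 1 ↔ x 1 = y 1 :=
  ⟨fun ⟨_, _, h⟩ => by simpa using h, hδ.isUnitriangular_of_eq⟩

lemma IsDerivation.exists_isDescent_isUnitriangular (hδ : IsDerivation δ) {m : ℕ}
    (hy : ∀ i ≤ m, δ^[i] (y i) = 1) :
    ∃ x, IsDescent δ m x ∧ ∀ i, IsUnitriangular δ y x i := by
  induction m with
  | zero =>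
    exact ⟨y, ⟨hy 0 le_rfl, fun i h1 h0 => by omega⟩,
      fun i => hδ.isUnitriangular_of_eq rfl⟩
  | succ n ih =>
    obtain ⟨x, hx, hxT⟩ := ih fun i hi => hy i (by omega)
    obtain ⟨c, hc, hxn⟩ := hx.exists_map_eq_add_sum hδ hy
    refine ⟨Function.update x (n + 1) (y (n + 1) + ∑ j ∈ Icc 1 n, c j * y j), ⟨?_, ?_⟩, ?_⟩
    · rw [Function.update_of_ne n.succ_ne_zero.symm, hx.1]
    · intro i h1 hi
      rcases hi.lt_or_eq with hi | rfl
      · rw [Function.update_of_ne hi.ne, Function.update_of_ne (by omega), hx.2 i h1 (by omega)]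
      · rw [Function.update_self, Function.update_of_ne (by omega), Nat.add_sub_cancel, hxn]
    · intro i
      rcases eq_or_ne i (n + 1) with rfl | hi
      · exact ⟨c, hc, by rw [Function.update_self, Nat.add_sub_cancel]⟩
      · obtain ⟨c, hc, hxc⟩ := hxT i
        exact ⟨c, hc, by rw [Function.update_of_ne hi, hxc]⟩

lemma IsDerivation.eq_of_isDescent_of_isUnitriangular (hδ : IsDerivation δ) {m : ℕ}
    (hy : ∀ i ≤ m, δ^[i] (y i) = 1) {x' : ℕ → A} (hx : IsDescent δ m x)
    (hx' : IsDescent δ m x') (hT : ∀ i, 1 ≤ i → i ≤ m → IsUnitriangular δ y x i)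
    (hT' : ∀ i, 1 ≤ i → i ≤ m → IsUnitriangular δ y x' i) : ∀ i ≤ m, x i = x' i := by
  intro i
  induction i with
  | zero => exact fun _ => hx.1.trans hx'.1.symm
  | succ i ih =>
    intro hi
    obtain ⟨c, hc, hxc⟩ := hT (i + 1) (by omega) hi
    obtain ⟨c', hc', hxc'⟩ := hT' (i + 1) (by omega) hi
    rw [Nat.add_sub_cancel] at hxc hxc'
    have hdiff : x (i + 1) - x' (i + 1) = ∑ j ∈ Icc 1 i, (c j - c' j) * y j := by
      simp only [hxc, hxc', sub_mul, sum_sub_distrib, add_sub_add_left_eq_sub]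
    have hconst : δ (x (i + 1) - x' (i + 1)) = 0 := by
      rw [hδ.map_sub, hx.2 _ (by omega) hi, hx'.2 _ (by omega) hi, Nat.add_sub_cancel,
        ih (by omega), sub_self]
    rw [hdiff] at hconst
    rw [← sub_eq_zero, hdiff]
    exact hδ.sum_Icc_eq_zero_of_map_eq_zero (fun j hj => hy j (by omega))
      (fun j => by rw [hδ.map_sub, hc, hc', sub_zero]) hconst

end Unitriangular

theorem stmt12 {A : Type*} [Ring A] (δ : A → A) (hδ : IsDerivation δ)
    (m : ℕ) (y : ℕ → A) (hy : ∀ i : ℕ, i ≤ m → δ^[i] (y i) = 1) :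
    -- existence of a `δ`-descent of the required form
    (∃ x : ℕ → A, IsDescent δ m x ∧ x 1 = y 1 ∧
      (∀ i : ℕ, 2 ≤ i → i ≤ m → ∃ c : ℕ → A, (∀ j, δ (c j) = 0) ∧
        x i = y i + ∑ j ∈ Finset.Icc 1 (i - 1), c j * y j)) ∧
    -- uniqueness: any two such `δ`-descents agree on `0, 1, …, m`
    (∀ x x' : ℕ → A,
      (IsDescent δ m x ∧ x 1 = y 1 ∧
        (∀ i : ℕ, 2 ≤ i → i ≤ m → ∃ c : ℕ → A, (∀ j, δ (c j) = 0) ∧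
          x i = y i + ∑ j ∈ Finset.Icc 1 (i - 1), c j * y j)) →
      (IsDescent δ m x' ∧ x' 1 = y 1 ∧
        (∀ i : ℕ, 2 ≤ i → i ≤ m → ∃ c : ℕ → A, (∀ j, δ (c j) = 0) ∧
          x' i = y i + ∑ j ∈ Finset.Icc 1 (i - 1), c j * y j)) →
      ∀ i : ℕ, i ≤ m → x i = x' i) := by
  have unitriangular_of {x : ℕ → A} (h1 : x 1 = y 1)
      (h2 : ∀ i, 2 ≤ i → i ≤ m → IsUnitriangular δ y x i) :
      ∀ i, 1 ≤ i → i ≤ m → IsUnitriangular δ y x i := fun i hi him =>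
    hi.eq_or_lt.elim (fun h => h ▸ hδ.isUnitriangular_one_iff.2 h1) (fun h => h2 i h him)
  obtain ⟨x, hx, hxT⟩ := hδ.exists_isDescent_isUnitriangular hy
  refine ⟨⟨x, hx, hδ.isUnitriangular_one_iff.1 (hxT 1), fun i _ _ => hxT i⟩, ?_⟩
  rintro x x' ⟨hx, hx1, hxT⟩ ⟨hx', hx1', hxT'⟩
  exact hδ.eq_of_isDescent_of_isUnitriangular hy hx hx'
    (unitriangular_of hx1 hxT) (unitriangular_of hx1' hxT')
end

section
/- Let p be a prime, A an 𝔽_p-algebra, and {x^{[i]} : 0 ≤ i < p^n} an iterative sequence in A. Then: (1) for each 1 ≤ i ≤ p^n−1 with p-adic expansion i = Σ_k i_k p^k (0 ≤ i_k < p), one has x^{[i]} = Π_k (x^{[p^k]})^{i_k}/i_k!; (2) (x^{[p^j]})^p = 0 for each 0 ≤ j ≤ n−1; (3) x^{[0]}·x^{[p^j]} = x^{[p^j]} for each j and x^{[0]}·x^{[0]} = x^{[0]}. Conversely, given pairwise commuting elements x^{[0]}, x^{[p^0]}, …, x^{[p^{n−1}]} of A satisfying the conditions of (2) and (3), the elements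 x^{[i]} defined by the formula in (1) form an iterative sequence. -/
/-!
Lucas's theorem, `C(i+j, i) ≡ C(i₀+j₀, i₀) · C(⌊i/p⌋+⌊j/p⌋, ⌊i/p⌋) (mod p)` when the last
digits `i₀, j₀` do not carry and `≡ 0` when they do, lets one peel off the last base-`p` digit.
If `x` is iterative of length `p^(n+1)`, then `k ↦ x^{[pk]}` is iterative of length `p^n`,
`x^{[i]} = x^{[i mod p]} · x^{[p⌊i/p⌋]}`, and `x^{[r]} = (x^{[1]})^r / r!` for `r < p`; induction
on `n` gives the product formula, and `(x^{[1]})^p = p! · x^{[p]} = 0`. Conversely, in the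
commutative subring generated by the data the same digit recursion shows that the divided-power
monomials form an iterative sequence with `x^{[0]} = 1`, and multiplying it by the idempotent
`x^{[0]}` gives the prescribed sequence.
-/

/-- An iterative sequence `{x^{[i]} : 0 ≤ i < p^n}` in a ring of characteristic `p`
(where by convention `x^{[k]} := 0` for `k ≥ p^n`). -/
def IsIterativeSeq (p n : ℕ) {R : Type*} [Ring R] (x : ℕ → R) : Prop :=
  (∀ k : ℕ, p ^ n ≤ k → x k = 0) ∧
  ∀ i < p ^ n, ∀ j < p ^ n, x i * x j = ((i + j).choose i : R) * x (i + j)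

open Nat

section Binomial

variable {p : ℕ} [Fact p.Prime]

theorem choose_mod_modEq_one (i : ℕ) : i.choose (i % p) ≡ 1 [MOD p] := by
  have hp := (Fact.out : p.Prime).pos
  refine Choose.choose_modEq_choose_mod_mul_choose_div_nat.trans ?_
  simp [Nat.div_eq_of_lt (Nat.mod_lt i hp), Nat.ModEq.refl]

theorem choose_add_modEq_of_mod_add_lt {i j : ℕ} (h : i % p + j % p < p) :
    (i + j).choose i ≡ (i % p + j % p).choose (i % p) * (i / p + j / p).choose (i / p) [MOD p] := by
  have hp := (Fact.out : p.Prime).pos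
  refine Choose.choose_modEq_choose_mod_mul_choose_div_nat.trans ?_
  rw [Nat.add_mod, Nat.mod_eq_of_lt h, Nat.add_div hp, if_neg (by omega), add_zero]

theorem choose_add_modEq_zero_of_le_mod_add {i j : ℕ} (h : p ≤ i % p + j % p) :
    (i + j).choose i ≡ 0 [MOD p] := by
  have hp := (Fact.out : p.Prime).pos
  refine Choose.choose_modEq_choose_mod_mul_choose_div_nat.trans ?_
  have hi := Nat.mod_lt i hp
  have hj := Nat.mod_lt j hp
  have hsum : (i + j) % p = i % p + j % p - p := by
    rw [Nat.add_mod, Nat.mod_eq_sub_mod h, Nat.mod_eq_of_lt (by omega)]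
  rw [Nat.choose_eq_zero_of_lt (by omega), zero_mul]

end Binomial

section DividedPowers

variable (p : ℕ) {R : Type*} [Ring R] [CharP R p]

/-- `1 / m!`, computed in `𝔽_p`; it is the inverse of `m!` only for `m < p`. -/
def invFactorial (m : ℕ) : R := ZMod.castHom (dvd_refl p) R ((m ! : ZMod p)⁻¹)

def dividedPow (a : R) (m : ℕ) : R := invFactorial p m * a ^ m

def digitMonomial (n : ℕ) (w : Fin n → R) (i : ℕ) : R :=
  (List.ofFn fun k : Fin n => dividedPow p (w k) (i / p ^ (k : ℕ) % p)).prod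

variable {p}

theorem map_invFactorial {S : Type*} [Ring S] [CharP S p] (f : R →+* S) (m : ℕ) :
    f (invFactorial p m) = invFactorial p m :=
  RingHom.congr_fun (RingHom.ext_zmod (f.comp (ZMod.castHom (dvd_refl p) R)) _) _

theorem map_digitMonomial {S : Type*} [Ring S] [CharP S p] (f : R →+* S) {n : ℕ}
    (w : Fin n → R) (i : ℕ) : f (digitMonomial p n w i) = digitMonomial p n (f ∘ w) i := by
  simp only [digitMonomial, dividedPow, map_list_prod, List.map_ofFn]
  congr 2
  ext k
  simp [map_invFactorial]

theorem digitMonomial_succ {n : ℕ} (w : Fin (n + 1) → R) (i : ℕ) :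
    digitMonomial p (n + 1) w i =
      dividedPow p (w 0) (i % p) * digitMonomial p n (Fin.tail w) (i / p) := by
  simp [digitMonomial, List.ofFn_succ, Fin.tail, pow_succ', Nat.div_div_eq_div_mul]

variable [Fact p.Prime]

theorem factorial_ne_zero_of_lt {m : ℕ} (hm : m < p) : (m ! : ZMod p) ≠ 0 := by
  rw [Ne, ZMod.natCast_eq_zero_iff, (Fact.out : p.Prime).dvd_factorial]
  omega

theorem invFactorial_mul_factorial {m : ℕ} (hm : m < p) : invFactorial p m * (m ! : R) = 1 := by
  rw [invFactorial, ← map_natCast (ZMod.castHom (dvd_refl p) R), ← map_mul,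
    inv_mul_cancel₀ (factorial_ne_zero_of_lt hm), map_one]

theorem invFactorial_zero : invFactorial p 0 = (1 : R) := by
  simpa using invFactorial_mul_factorial (R := R) (Fact.out : p.Prime).pos

theorem invFactorial_mul_invFactorial {r s : ℕ} (h : r + s < p) :
    invFactorial p r * invFactorial p s = ((r + s).choose r : R) * invFactorial p (r + s) := by
  simp only [invFactorial, ← map_natCast (ZMod.castHom (dvd_refl p) R), ← map_mul]
  congr 1
  have hrs := add_choose_mul_factorial_mul_factorial s r
  rw [add_comm s r] at hrs
  rw [eq_mul_inv_iff_mul_eq₀ (factorial_ne_zero_of_lt h), ← hrs]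
  field_simp [factorial_ne_zero_of_lt (show r < p by omega),
    factorial_ne_zero_of_lt (show s < p by omega)]
  push_cast
  ring

theorem dividedPow_zero (a : R) : dividedPow p a 0 = 1 := by
  simp [dividedPow, invFactorial_zero]

theorem digitMonomial_apply_zero {n : ℕ} (w : Fin n → R) : digitMonomial p n w 0 = 1 := by
  simp [digitMonomial, dividedPow_zero]

end DividedPowers

namespace IsIterativeSeq

variable {p n : ℕ} {R : Type*} [Ring R] {x : ℕ → R}

theorem mul_eq (hx : IsIterativeSeq p n x) (i j : ℕ) :
    x i * x j = ((i + j).choose i : R) * x (i + j) := by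
  by_cases hi : i < p ^ n
  · by_cases hj : j < p ^ n
    · exact hx.2 i hi j hj
    · rw [hx.1 j (by omega), hx.1 (i + j) (by omega), mul_zero, mul_zero]
  · rw [hx.1 i (by omega), hx.1 (i + j) (by omega), zero_mul, mul_zero]

theorem apply_zero_mul (hx : IsIterativeSeq p n x) (i : ℕ) : x 0 * x i = x i := by
  simpa using hx.mul_eq 0 i

theorem map {S : Type*} [Ring S] (hx : IsIterativeSeq p n x) (f : R →+* S) :
    IsIterativeSeq p n (f ∘ x) :=
  ⟨fun k hk => by simp [hx.1 k hk], fun i _ j _ => by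
    simp only [Function.comp_apply]
    rw [← map_mul, hx.mul_eq, map_mul, map_natCast]⟩

theorem pow_apply_one (hx : IsIterativeSeq p n x) {m : ℕ} (hm : 1 ≤ m) :
    x 1 ^ m = (m ! : R) * x m := by
  induction m, hm using Nat.le_induction with
  | base => simp
  | succ m _ ih =>
    rw [pow_succ, ih, mul_assoc, hx.mul_eq, choose_succ_self_right, ← mul_assoc, ← Nat.cast_mul,
      factorial_succ, mul_comm]

variable [CharP R p] [Fact p.Prime]

theorem comp_pow_mul (hx : IsIterativeSeq p n x) (j : ℕ) :
    IsIterativeSeq p (n - j) fun k => x (p ^ j * k) := by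
  have hp := (Fact.out : p.Prime).one_lt
  refine ⟨fun k hk => hx.1 _ ?_, fun a _ b _ => ?_⟩
  · calc p ^ n ≤ p ^ j * p ^ (n - j) := by
          rw [← pow_add]; exact Nat.pow_le_pow_right (by omega) (by omega)
      _ ≤ p ^ j * k := Nat.mul_le_mul_left _ hk
  · rw [hx.mul_eq, ← mul_add, (CharP.natCast_eq_natCast R p).2
      Choose.choose_pow_mul_pow_mul_modEq_choose_nat]

theorem pow_prime_eq_zero (hx : IsIterativeSeq p n x) (j : ℕ) : x (p ^ j) ^ p = 0 := by
  have hp := (Fact.out : p.Prime)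
  simpa [(CharP.cast_eq_zero_iff R p _).2 (dvd_factorial hp.pos le_rfl)] using
    (hx.comp_pow_mul j).pow_apply_one hp.one_le

theorem eq_dividedPow (hx : IsIterativeSeq p n x) {m : ℕ} (h1 : 1 ≤ m) (hm : m < p) :
    x m = dividedPow p (x 1) m := by
  rw [dividedPow, hx.pow_apply_one h1, ← mul_assoc, invFactorial_mul_factorial hm, one_mul]

theorem apply_mod_mul_apply_mul_div (hx : IsIterativeSeq p n x) (i : ℕ) :
    x (i % p) * x (p * (i / p)) = x i := by
  rw [hx.mul_eq, Nat.mod_add_div, (CharP.natCast_eq_natCast R p).2 (choose_mod_modEq_one i),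
    cast_one, one_mul]

theorem eq_digitMonomial (hx : IsIterativeSeq p n x) {i : ℕ} (h1 : 1 ≤ i) (hi : i < p ^ n) :
    x i = digitMonomial p n (fun k => x (p ^ (k : ℕ))) i := by
  induction n generalizing x i with
  | zero => simp at hi; omega
  | succ n ih =>
    have hp := (Fact.out : p.Prime).pos
    have hy : IsIterativeSeq p n fun k => x (p * k) := by simpa using hx.comp_pow_mul 1
    have htail : Fin.tail (fun k : Fin (n + 1) => x (p ^ (k : ℕ))) =
        fun k : Fin n => x (p * p ^ (k : ℕ)) := by
      funext k; simp [Fin.tail, pow_succ']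
    have hq : i / p < p ^ n := by rw [Nat.div_lt_iff_lt_mul hp, ← pow_succ]; exact hi
    rw [digitMonomial_succ, htail]
    simp only [Fin.val_zero, pow_zero]
    rcases (i / p).eq_zero_or_pos with hq0 | hq0
    · have hip : i < p := by rwa [Nat.div_eq_zero_iff_lt hp] at hq0
      rw [hq0, digitMonomial_apply_zero, mul_one, Nat.mod_eq_of_lt hip, hx.eq_dividedPow h1 hip]
    rcases (i % p).eq_zero_or_pos with hr0 | hr0
    · rw [hr0, dividedPow_zero, one_mul, ← ih hy hq0 hq,
        Nat.mul_div_cancel' (Nat.dvd_of_mod_eq_zero hr0)]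
    · rw [← hx.apply_mod_mul_apply_mul_div i, hx.eq_dividedPow hr0 (Nat.mod_lt i hp), ih hy hq0 hq]

end IsIterativeSeq

section Converse

variable {p : ℕ} {R : Type*} [CommRing R]

theorem IsIterativeSeq.idempotent_mul {n : ℕ} {x : ℕ → R} (hx : IsIterativeSeq p n x) {e : R}
    (he : e * e = e) : IsIterativeSeq p n fun i => e * x i :=
  ⟨fun k hk => by simp [hx.1 k hk], fun i hi j hj => by
    dsimp only
    rw [mul_mul_mul_comm, he, hx.2 i hi j hj, mul_left_comm]⟩

variable [CharP R p] [Fact p.Prime]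

variable (p) in
/-- The iterative sequence with `x^{[0]} = 1` and `x^{[p^k]} = w k`. -/
def dividedPowSeq (n : ℕ) (w : Fin n → R) (i : ℕ) : R :=
  if i < p ^ n then digitMonomial p n w i else 0

theorem dividedPowSeq_succ {n : ℕ} (w : Fin (n + 1) → R) (i : ℕ) :
    dividedPowSeq p (n + 1) w i =
      dividedPow p (w 0) (i % p) * dividedPowSeq p n (Fin.tail w) (i / p) := by
  have hp := (Fact.out : p.Prime).pos
  simp only [dividedPowSeq, digitMonomial_succ, Nat.div_lt_iff_lt_mul hp, ← pow_succ]
  split_ifs <;> simp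

theorem dividedPow_mul_dividedPow {w : R} (hw : w ^ p = 0) (r s : ℕ) :
    dividedPow p w r * dividedPow p w s = ((r + s).choose r : R) * dividedPow p w (r + s) := by
  have hprod : dividedPow p w r * dividedPow p w s =
      invFactorial p r * invFactorial p s * w ^ (r + s) := by
    rw [dividedPow, dividedPow, pow_add]
    ring
  rw [hprod]
  by_cases h : r + s < p
  · rw [invFactorial_mul_invFactorial h, dividedPow, mul_assoc]
  · rw [dividedPow, pow_eq_zero_of_le (by omega) hw, mul_zero, mul_zero, mul_zero]

theorem dividedPowSeq_mul {n : ℕ} {w : Fin n → R} (hw : ∀ k, w k ^ p = 0) (i j : ℕ) :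
    dividedPowSeq p n w i * dividedPowSeq p n w j =
      ((i + j).choose i : R) * dividedPowSeq p n w (i + j) := by
  induction n generalizing i j with
  | zero =>
    rcases i.eq_zero_or_pos with rfl | hi
    · simp [dividedPowSeq, digitMonomial]
    · simp [dividedPowSeq, show ¬ i < 1 by omega, show ¬ i + j < 1 by omega]
  | succ n ih =>
    simp only [dividedPowSeq_succ]
    rw [mul_mul_mul_comm, dividedPow_mul_dividedPow (hw 0),
      ih (w := Fin.tail w) (fun k => hw k.succ)]
    by_cases h : i % p + j % p < p
    · have hp := (Fact.out : p.Prime).pos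
      rw [(CharP.natCast_eq_natCast R p).2 (choose_add_modEq_of_mod_add_lt h), Nat.add_mod,
        Nat.mod_eq_of_lt h, Nat.add_div hp, if_neg (by omega), add_zero]
      push_cast
      ring
    · have hzero : dividedPow p (w 0) (i % p + j % p) = 0 := by
        rw [dividedPow, pow_eq_zero_of_le (by omega) (hw 0), mul_zero]
      rw [(CharP.natCast_eq_natCast R p).2 (choose_add_modEq_zero_of_le_mod_add (i := i) (j := j)
        (by omega)), hzero, cast_zero, mul_zero, zero_mul, zero_mul]

theorem isIterativeSeq_dividedPowSeq {n : ℕ} {w : Fin n → R} (hw : ∀ k, w k ^ p = 0) :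
    IsIterativeSeq p n (dividedPowSeq p n w) :=
  ⟨fun _ hk => if_neg (by omega), fun i _ j _ => dividedPowSeq_mul hw i j⟩

theorem mul_dividedPowSeq_of_ne_zero {n : ℕ} {w : Fin n → R} {e : R} (he : ∀ k, e * w k = w k)
    {i : ℕ} (hi : i ≠ 0) : e * dividedPowSeq p n w i = dividedPowSeq p n w i := by
  induction n generalizing i with
  | zero => simp [dividedPowSeq, show ¬ i < 1 by omega]
  | succ n ih =>
    rw [dividedPowSeq_succ]
    by_cases hr : i % p = 0
    · have hq : i / p ≠ 0 := by
        intro hq; have := Nat.mod_add_div i p; rw [hr, hq] at this; omega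
      rw [mul_left_comm, ih (w := Fin.tail w) (fun k => he k.succ) hq]
    · obtain ⟨m, hm⟩ := Nat.exists_eq_succ_of_ne_zero hr
      rw [← mul_assoc, hm, dividedPow, mul_left_comm, _root_.pow_succ', ← mul_assoc e, he]

end Converse

open scoped IsMulCommutative in
theorem isIterativeSeq_of_eq_digitMonomial {p n : ℕ} {A : Type*} [Ring A] [CharP A p]
    [Fact p.Prime] {x₀ : A} {w : Fin n → A} (hx₀w : ∀ j, x₀ * w j = w j * x₀)
    (hww : ∀ j k, w j * w k = w k * w j) (hwp : ∀ j, w j ^ p = 0) (habs : ∀ j, x₀ * w j = w j)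
    (hx₀ : x₀ * x₀ = x₀) {z : ℕ → A} (hz₀ : z 0 = x₀)
    (hz : ∀ i, 1 ≤ i → i < p ^ n → z i = digitMonomial p n w i)
    (hztop : ∀ i, p ^ n ≤ i → z i = 0) : IsIterativeSeq p n z := by
  set S := Subring.closure (insert x₀ (Set.range w))
  have : IsMulCommutative S := Subring.isMulCommutative_closure <| by
    rintro _ (rfl | ⟨j, rfl⟩) _ (rfl | ⟨k, rfl⟩)
    exacts [rfl, hx₀w k, (hx₀w j).symm, hww j k]
  let X₀ : S := ⟨x₀, Subring.subset_closure (Set.mem_insert _ _)⟩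
  let W : Fin n → S := fun k => ⟨w k, Subring.subset_closure (Set.mem_insert_of_mem _ ⟨k, rfl⟩)⟩
  have hWp : ∀ k, W k ^ p = 0 := fun k => Subtype.ext (hwp k)
  have hz' : z = S.subtype ∘ fun i => X₀ * dividedPowSeq p n W i := by
    funext i
    rcases i.eq_zero_or_pos with rfl | hi₁
    · simp [dividedPowSeq, digitMonomial_apply_zero, hz₀, X₀, (Fact.out : p.Prime).pos]
    by_cases hi : i < p ^ n
    · rw [Function.comp_apply, mul_dividedPowSeq_of_ne_zero (fun k => Subtype.ext (habs k))
        hi₁.ne', dividedPowSeq, if_pos hi, map_digitMonomial, hz i hi₁ hi]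
      rfl
    · simp [dividedPowSeq, hi, hztop i (not_lt.1 hi)]
  rw [hz']
  exact ((isIterativeSeq_dividedPowSeq hWp).idempotent_mul (Subtype.ext hx₀)).map S.subtype

theorem stmt13 {A : Type*} [Ring A] (p : ℕ) (hp : p.Prime) [CharP A p] (n : ℕ)
    -- the inverse of `m!` in `𝔽_p`, transported to `A`
    (finv : ℕ → A) (hfinv : ∀ m : ℕ, finv m =
      ZMod.castHom (dvd_refl p) A ((m.factorial : ZMod p)⁻¹)) :
    (∀ x : ℕ → A, IsIterativeSeq p n x →
      -- (1) `x^{[i]} = Π_k (x^{[p^k]})^{i_k}/i_k!` for the `p`-adic digits `i_k` of `i`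
      (∀ i : ℕ, 1 ≤ i → i < p ^ n →
        x i = ((List.ofFn fun k : Fin n =>
          finv (i / p ^ (k : ℕ) % p) * (x (p ^ (k : ℕ))) ^ (i / p ^ (k : ℕ) % p)).prod)) ∧
      -- (2) `(x^{[p^j]})^p = 0`
      (∀ j < n, (x (p ^ j)) ^ p = 0) ∧
      -- (3) `x^{[0]}·x^{[p^j]} = x^{[p^j]}` and `x^{[0]}·x^{[0]} = x^{[0]}`
      (∀ j < n, x 0 * x (p ^ j) = x (p ^ j)) ∧ x 0 * x 0 = x 0) ∧
    -- Converse: pairwise commuting elements satisfying (2) and (3) give rise to an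
    -- iterative sequence via the formula of (1)
    (∀ (x0 : A) (w : Fin n → A),
      (∀ j, x0 * w j = w j * x0) → (∀ j k, w j * w k = w k * w j) →
      (∀ j, (w j) ^ p = 0) → (∀ j, x0 * w j = w j) → x0 * x0 = x0 →
      ∀ z : ℕ → A, z 0 = x0 →
        (∀ i : ℕ, 1 ≤ i → i < p ^ n →
          z i = ((List.ofFn fun k : Fin n =>
            finv (i / p ^ (k : ℕ) % p) * (w k) ^ (i / p ^ (k : ℕ) % p)).prod)) →
        (∀ i : ℕ, p ^ n ≤ i → z i = 0) →
        IsIterativeSeq p n z) := by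
  have : Fact p.Prime := ⟨hp⟩
  obtain rfl : finv = invFactorial p := funext hfinv
  refine ⟨fun x hx => ⟨fun i h₁ hi => hx.eq_digitMonomial h₁ hi,
    fun j _ => hx.pow_prime_eq_zero j, fun j _ => hx.apply_zero_mul _, hx.apply_zero_mul 0⟩, ?_⟩
  intro x₀ w hx₀w hww hwp habs hx₀ z hz₀ hz hztop
  exact isIterativeSeq_of_eq_digitMonomial hx₀w hww hwp habs hx₀ hz₀ hz hztop
end
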